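/- arXiv:0903.3736 — 4 statements merged into one kernel-verified Lean document; each statement's English description precedes it below -/
import Mathlib

section
/- If f, g are nonnegative random variables with rel(f|g) ≤ 0 and rel(g|f) ≤ 0, then f = g almost surely. -/
/-!
Pointwise, `qdiv x y + qdiv y x ≥ 2`, with equality only for `x = y`: for positive `x, y` the sum
is `2 + (x - y)² / (x y)`, and it is `∞` when exactly one of them vanishes. The hypotheses bound
the integral of this sum by `2`, so on a probability space it equals `2` almost everywhere.
-/

open MeasureTheory
open scoped ENNReal

/-- Division of nonnegative reals with the conventions `x / 0 = ∞` for `x > 0`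
and `0 / 0 = 1`, valued in `ℝ≥0∞`. -/
noncomputable def qdiv (x y : ℝ) : ℝ≥0∞ :=
  if x = 0 ∧ y = 0 then 1 else if y = 0 then ⊤ else ENNReal.ofReal (x / y)

theorem Measurable.qdiv {Ω : Type*} [MeasurableSpace Ω] {f g : Ω → ℝ}
    (hf : Measurable f) (hg : Measurable g) :
    Measurable fun ω => qdiv (f ω) (g ω) := by
  have hf0 : MeasurableSet {ω | f ω = 0} := hf (measurableSet_singleton 0)
  have hg0 : MeasurableSet {ω | g ω = 0} := hg (measurableSet_singleton 0)
  exact Measurable.ite (hf0.inter hg0) measurable_const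
    (Measurable.ite hg0 measurable_const (hf.div hg).ennreal_ofReal)

theorem qdiv_zero_zero : qdiv 0 0 = 1 := by simp [qdiv]

theorem qdiv_zero_of_ne_zero {x : ℝ} (hx : x ≠ 0) : qdiv x 0 = ⊤ := by simp [qdiv, hx]

theorem qdiv_of_ne_zero (x : ℝ) {y : ℝ} (hy : y ≠ 0) : qdiv x y = ENNReal.ofReal (x / y) := by
  simp [qdiv, hy]

theorem div_add_div_eq_two_add {x y : ℝ} (hx : x ≠ 0) (hy : y ≠ 0) :
    x / y + y / x = 2 + (x - y) ^ 2 / (x * y) := by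
  field_simp
  ring

theorem qdiv_add_qdiv_of_pos {x y : ℝ} (hx : 0 < x) (hy : 0 < y) :
    qdiv x y + qdiv y x = ENNReal.ofReal (2 + (x - y) ^ 2 / (x * y)) := by
  rw [qdiv_of_ne_zero x hy.ne', qdiv_of_ne_zero y hx.ne', ← ENNReal.ofReal_add (by positivity)
    (by positivity), div_add_div_eq_two_add hx.ne' hy.ne']

theorem qdiv_add_qdiv_zero {x : ℝ} (hx : x ≠ 0) : qdiv x 0 + qdiv 0 x = ⊤ := by
  simp [qdiv_zero_of_ne_zero hx]

theorem two_le_qdiv_add_qdiv {x y : ℝ} (hx : 0 ≤ x) (hy : 0 ≤ y) :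
    2 ≤ qdiv x y + qdiv y x := by
  rcases hx.eq_or_lt with rfl | hx <;> rcases hy.eq_or_lt with rfl | hy
  · rw [qdiv_zero_zero, one_add_one_eq_two]
  · simp [add_comm, qdiv_add_qdiv_zero hy.ne']
  · simp [qdiv_add_qdiv_zero hx.ne']
  · rw [qdiv_add_qdiv_of_pos hx hy, ← ENNReal.ofReal_ofNat]
    exact ENNReal.ofReal_le_ofReal (le_add_of_nonneg_right (by positivity))

theorem eq_of_qdiv_add_qdiv_eq_two {x y : ℝ} (hx : 0 ≤ x) (hy : 0 ≤ y)
    (h : qdiv x y + qdiv y x = 2) : x = y := by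
  rcases hx.eq_or_lt with rfl | hx <;> rcases hy.eq_or_lt with rfl | hy
  · rfl
  · simp [add_comm, qdiv_add_qdiv_zero hy.ne'] at h
  · simp [qdiv_add_qdiv_zero hx.ne'] at h
  · rw [qdiv_add_qdiv_of_pos hx hy, ← ENNReal.ofReal_ofNat,
      ENNReal.ofReal_eq_ofReal_iff (by positivity) zero_le_two] at h
    have : (x - y) ^ 2 = 0 := by simpa [hx.ne', hy.ne'] using h
    exact sub_eq_zero.mp (pow_eq_zero_iff two_ne_zero |>.mp this)

theorem ae_eq_const_of_ae_const_le_of_lintegral_le {α : Type*} [MeasurableSpace α]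
    {μ : Measure α} [IsProbabilityMeasure μ] {h : α → ℝ≥0∞} {c : ℝ≥0∞} (hc : c ≠ ∞)
    (hle : ∀ᵐ x ∂μ, c ≤ h x) (hh : AEMeasurable h μ) (hint : ∫⁻ x, h x ∂μ ≤ c) :
    ∀ᵐ x ∂μ, h x = c := by
  have hconst : ∫⁻ _, c ∂μ = c := by simp
  filter_upwards [ae_eq_of_ae_le_of_lintegral_le hle (by rwa [hconst]) hh (by rwa [hconst])]
    with x hx using hx.symm

/-- If `rel(f|g) ≤ 0` and `rel(g|f) ≤ 0`, i.e. `E[f/g] ≤ 1` and `E[g/f] ≤ 1`,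
then `f = g` almost surely. -/
theorem stmt1 {Ω : Type*} [MeasurableSpace Ω] (P : Measure Ω) [IsProbabilityMeasure P]
    (f g : Ω → ℝ) (hf : Measurable f) (hg : Measurable g)
    (hf0 : ∀ ω, 0 ≤ f ω) (hg0 : ∀ ω, 0 ≤ g ω)
    (hfg : ∫⁻ ω, qdiv (f ω) (g ω) ∂P ≤ 1)
    (hgf : ∫⁻ ω, qdiv (g ω) (f ω) ∂P ≤ 1) :
    f =ᵐ[P] g := by
  have hsum : ∫⁻ ω, qdiv (f ω) (g ω) + qdiv (g ω) (f ω) ∂P ≤ 2 := by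
    rw [lintegral_add_left (hf.qdiv hg), ← one_add_one_eq_two]
    exact add_le_add hfg hgf
  have hsum_eq : ∀ᵐ ω ∂P, qdiv (f ω) (g ω) + qdiv (g ω) (f ω) = 2 :=
    ae_eq_const_of_ae_const_le_of_lintegral_le ENNReal.ofNat_ne_top
      (ae_of_all _ fun ω => two_le_qdiv_add_qdiv (hf0 ω) (hg0 ω))
      ((hf.qdiv hg).add (hg.qdiv hf)).aemeasurable hsum
  filter_upwards [hsum_eq] with ω hω using eq_of_qdiv_add_qdiv_eq_two (hf0 ω) (hg0 ω) hω
end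

section
/- Insurance reversal: if f, g are nonnegative random variables with P[g < f] > 0, E[(g-f)/f · 1_{g<f}] < 0 and finite, then there exists N ∈ ℕ such that, with h := N·g·1_{f ≤ g}, one has E[(g+h)/(f+h)] < 1. -/
open MeasureTheory
open scoped ENNReal

/-! Insuring the outcomes with `f ≤ g` by `t·g` pushes their ratio `(1+t)g/(f+tg)` below
`1 + 1/t`, while the outcomes with `g < f` keep the ratio `g/f = 1 + (g-f)/f`. Hence
`E[(g+h)/(f+h)] ≤ 1 + 1/t + E[(g-f)/f · 1_{g<f}]`, which is `< 1` as soon as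
`1/t < -E[(g-f)/f · 1_{g<f}]`. -/

noncomputable def relLoss (f g : ℝ) : ℝ := if g < f then (g - f) / f else 0

lemma qdiv_of_pos {x y : ℝ} (hy : 0 < y) : qdiv x y = ENNReal.ofReal (x / y) := by
  rw [qdiv, if_neg (fun h => hy.ne' h.2), if_neg hy.ne']

lemma one_add_relLoss_of_lt {f g : ℝ} (hg : 0 ≤ g) (hgf : g < f) :
    1 + relLoss f g = g / f := by
  have hf : 0 < f := hg.trans_lt hgf
  rw [relLoss, if_pos hgf]
  field_simp
  ring

lemma neg_one_le_relLoss {f g : ℝ} (hg : 0 ≤ g) : -1 ≤ relLoss f g := by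
  by_cases hgf : g < f
  · have := one_add_relLoss_of_lt hg hgf
    have : 0 ≤ g / f := div_nonneg hg (hg.trans hgf.le)
    linarith
  · simp [relLoss, hgf]

lemma insured_ratio_le {f g t : ℝ} (hf : 0 ≤ f) (hfg : f ≤ g) (ht : 0 < t) :
    qdiv (g + t * g) (f + t * g) ≤ ENNReal.ofReal (1 + t⁻¹) := by
  rcases (hf.trans hfg).eq_or_lt with hg | hg
  · have hf' : f = 0 := le_antisymm (hg ▸ hfg) hf
    subst hf'; rw [← hg]
    simp only [mul_zero, add_zero, qdiv, and_self, if_true]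
    exact ENNReal.one_le_ofReal.mpr (by linarith [inv_pos.mpr ht])
  · have hden : 0 < f + t * g := by positivity
    rw [qdiv_of_pos hden]
    gcongr
    rw [div_le_iff₀ hden]
    have : t⁻¹ * t = 1 := inv_mul_cancel₀ ht.ne'
    nlinarith [mul_nonneg (inv_pos.mpr ht).le hf]

lemma qdiv_insured_le {f g t : ℝ} (hf : 0 ≤ f) (hg : 0 ≤ g) (ht : 0 < t) :
    qdiv (g + t * g * (if f ≤ g then 1 else 0)) (f + t * g * (if f ≤ g then 1 else 0)) ≤
      ENNReal.ofReal (1 + t⁻¹ + relLoss f g) := by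
  by_cases hfg : f ≤ g
  · simpa [relLoss, not_lt.mpr hfg, hfg] using insured_ratio_le hf hfg ht
  · have hgf : g < f := not_le.mp hfg
    simp only [hfg, if_false, mul_zero, add_zero]
    rw [qdiv_of_pos (hg.trans_lt hgf), add_right_comm, one_add_relLoss_of_lt hg hgf]
    gcongr
    linarith [inv_pos.mpr ht]

lemma lintegral_ofReal_const_add_lt_one {Ω : Type*} [MeasurableSpace Ω] {P : Measure Ω}
    [IsProbabilityMeasure P] {F : Ω → ℝ} {c : ℝ} (hF : Integrable F P)
    (hnn : ∀ ω, 0 ≤ c + F ω) (hlt : c + ∫ ω, F ω ∂P < 1) :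
    ∫⁻ ω, ENNReal.ofReal (c + F ω) ∂P < 1 := by
  have hcF : Integrable (fun ω => c + F ω) P := (integrable_const c).add hF
  rw [← ofReal_integral_eq_lintegral_ofReal hcF (Filter.Eventually.of_forall hnn),
    integral_add (integrable_const c) hF, integral_const, probReal_univ, one_smul]
  exact ENNReal.ofReal_lt_one.mpr hlt

theorem stmt9_general {Ω : Type*} [MeasurableSpace Ω] (P : Measure Ω) [IsProbabilityMeasure P]
    (f g : Ω → ℝ)
    (hf0 : ∀ ω, 0 ≤ f ω) (hg0 : ∀ ω, 0 ≤ g ω)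
    (hint : Integrable (fun ω => if g ω < f ω then (g ω - f ω) / f ω else 0) P)
    (hneg : ∫ ω, (if g ω < f ω then (g ω - f ω) / f ω else 0) ∂P < 0) :
    ∃ N : ℕ,
      ∫⁻ ω, qdiv (g ω + N * g ω * (if f ω ≤ g ω then 1 else 0))
        (f ω + N * g ω * (if f ω ≤ g ω then 1 else 0)) ∂P < 1 := by
  obtain ⟨n, hn⟩ := exists_nat_one_div_lt (neg_pos.mpr hneg)
  have hN : (0 : ℝ) < (n + 1 : ℕ) := Nat.cast_pos.mpr n.succ_pos
  refine ⟨n + 1, lt_of_le_of_lt (lintegral_mono fun ω => qdiv_insured_le (hf0 ω) (hg0 ω) hN) ?_⟩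
  refine lintegral_ofReal_const_add_lt_one hint (fun ω => ?_) ?_
  · linarith [inv_pos.mpr hN, neg_one_le_relLoss (f := f ω) (hg0 ω)]
  · simp only [relLoss, Nat.cast_add, Nat.cast_one, ← one_div]
    linarith

/-- Insurance reversal: if `P[g < f] > 0` and `E[(g-f)/f · 1_{g<f}]` is finite and
negative, then there is `N ∈ ℕ` such that, with `h = N·g·1_{f ≤ g}`,
`E[(g+h)/(f+h)] < 1`. -/
theorem stmt9 {Ω : Type*} [MeasurableSpace Ω] (P : Measure Ω) [IsProbabilityMeasure P]
    (f g : Ω → ℝ) (hf : Measurable f) (hg : Measurable g)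
    (hf0 : ∀ ω, 0 ≤ f ω) (hg0 : ∀ ω, 0 ≤ g ω)
    (hlt : 0 < P {ω | g ω < f ω})
    (hint : Integrable (fun ω => if g ω < f ω then (g ω - f ω) / f ω else 0) P)
    (hneg : ∫ ω, (if g ω < f ω then (g ω - f ω) / f ω else 0) ∂P < 0) :
    ∃ N : ℕ,
      ∫⁻ ω, qdiv (g ω + N * g ω * (if f ω ≤ g ω then 1 else 0))
        (f ω + N * g ω * (if f ω ≤ g ω then 1 else 0)) ∂P < 1 :=
  stmt9_general P f g hf0 hg0 hint hneg
end

section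
/- If f > 0 a.s. with f bounded above by a constant M and E_P[log f] < 0, then there exists n ∈ ℕ such that E_P[f^{1/n}] ≤ 1. -/
open MeasureTheory Filter Set
open scoped ENNReal Topology

/-!
With `ℓₙ(x) = n (x^{1/n} - 1)`, convexity of `t ↦ x^t` makes `ℓₙ(x)` decrease to `log x`, and
`ℓ₁(x) = x - 1 ≤ M`. By monotone convergence the positive and negative parts of `E ℓₙ(f)`
converge to those of `E log f`, so for some `n` the positive part of `E ℓₙ(f)` is strictly
smaller than its negative part. Since `f^{1/n} = 1 + ℓₙ(f) / n`, this gives `E f^{1/n} ≤ 1`.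
-/

namespace Real

theorem monotoneOn_slope_rpow_zero {x : ℝ} (hx : 0 < x) :
    MonotoneOn (slope (fun t : ℝ => x ^ t) 0) (Ioi 0) :=
  ((convexOn_rpow_left hx).slope_mono (mem_univ 0)).mono fun _ ht =>
    ⟨mem_univ _, (mem_Ioi.mp ht).ne'⟩

theorem tendsto_slope_rpow_zero {x : ℝ} (hx : 0 < x) :
    Tendsto (slope (fun t : ℝ => x ^ t) 0) (𝓝[≠] 0) (𝓝 (log x)) := by
  refine hasDerivAt_iff_tendsto_slope.mp ?_
  simpa using (hasStrictDerivAt_const_rpow hx 0).hasDerivAt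

theorem slope_rpow_zero (x t : ℝ) : slope (fun t : ℝ => x ^ t) 0 t = t⁻¹ * (x ^ t - 1) := by
  simp [slope_def_field, div_eq_inv_mul]

theorem antitone_succ_mul_rpow_one_div_succ_sub_one {x : ℝ} (hx : 0 < x) :
    Antitone fun n : ℕ => ((n : ℝ) + 1) * (x ^ (1 / ((n : ℝ) + 1)) - 1) := by
  intro m n hmn
  have key := monotoneOn_slope_rpow_zero hx (a := 1 / ((n : ℝ) + 1)) (b := 1 / ((m : ℝ) + 1))
    (by simp only [mem_Ioi]; positivity) (by simp only [mem_Ioi]; positivity)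
    (by gcongr)
  simpa [slope_rpow_zero] using key

theorem tendsto_succ_mul_rpow_one_div_succ_sub_one {x : ℝ} (hx : 0 < x) :
    Tendsto (fun n : ℕ => ((n : ℝ) + 1) * (x ^ (1 / ((n : ℝ) + 1)) - 1)) atTop
      (𝓝 (log x)) := by
  have ht : Tendsto (fun n : ℕ => 1 / ((n : ℝ) + 1)) atTop (𝓝[≠] 0) :=
    tendsto_nhdsWithin_of_tendsto_nhds_of_eventually_within _
      tendsto_one_div_add_atTop_nhds_zero_nat (Eventually.of_forall fun n => by
        simp only [mem_compl_singleton_iff]; positivity)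
  simpa [Function.comp_def, slope_rpow_zero] using (tendsto_slope_rpow_zero hx).comp ht

end Real

theorem ENNReal.ofReal_add_ofReal_one_sub {y : ℝ} (hy : 0 ≤ y) :
    ENNReal.ofReal y + ENNReal.ofReal (1 - y) = 1 + ENNReal.ofReal (y - 1) := by
  rcases le_total y 1 with h | h
  · rw [← ENNReal.ofReal_add hy (by linarith), ENNReal.ofReal_of_nonpos (by linarith : y - 1 ≤ 0)]
    simp
  · rw [ENNReal.ofReal_of_nonpos (by linarith : 1 - y ≤ 0), ← ENNReal.ofReal_one,
      ← ENNReal.ofReal_add zero_le_one (by linarith)]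
    simp

section

variable {Ω : Type*} [MeasurableSpace Ω] {μ : Measure Ω}

theorem lintegral_ofReal_le_one_of_lintegral_ofReal_sub_one_le [IsProbabilityMeasure μ]
    {g : Ω → ℝ} (hg : AEMeasurable g μ) (hg0 : 0 ≤ᵐ[μ] g)
    (h : ∫⁻ ω, ENNReal.ofReal (g ω - 1) ∂μ ≤ ∫⁻ ω, ENNReal.ofReal (1 - g ω) ∂μ) :
    ∫⁻ ω, ENNReal.ofReal (g ω) ∂μ ≤ 1 := by
  have hfin : ∫⁻ ω, ENNReal.ofReal (1 - g ω) ∂μ ≠ ∞ := by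
    refine ne_top_of_le_ne_top (b := ∫⁻ _, 1 ∂μ) (by simp) (lintegral_mono_ae ?_)
    filter_upwards [hg0] with ω hω
    simpa using hω
  refine ENNReal.le_of_add_le_add_right hfin ?_
  calc ∫⁻ ω, ENNReal.ofReal (g ω) ∂μ + ∫⁻ ω, ENNReal.ofReal (1 - g ω) ∂μ
      = ∫⁻ ω, (1 + ENNReal.ofReal (g ω - 1)) ∂μ := by
        rw [← lintegral_add_left' hg.ennreal_ofReal]
        refine lintegral_congr_ae ?_
        filter_upwards [hg0] with ω hω using ENNReal.ofReal_add_ofReal_one_sub hω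
    _ = 1 + ∫⁻ ω, ENNReal.ofReal (g ω - 1) ∂μ := by
        rw [lintegral_add_left measurable_const]; simp
    _ ≤ 1 + ∫⁻ ω, ENNReal.ofReal (1 - g ω) ∂μ := by gcongr

theorem lintegral_ofReal_const_mul {c : ℝ} (hc : 0 ≤ c) (g : Ω → ℝ) :
    ∫⁻ ω, ENNReal.ofReal (c * g ω) ∂μ = ENNReal.ofReal c * ∫⁻ ω, ENNReal.ofReal (g ω) ∂μ := by
  simp_rw [ENNReal.ofReal_mul hc]
  exact lintegral_const_mul' _ _ ENNReal.ofReal_ne_top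

theorem exists_lintegral_ofReal_lt_lintegral_ofReal_neg {g : ℕ → Ω → ℝ} {h : Ω → ℝ}
    (hg : ∀ n, AEMeasurable (g n) μ) (h_anti : ∀ᵐ ω ∂μ, Antitone fun n => g n ω)
    (h_tendsto : ∀ᵐ ω ∂μ, Tendsto (fun n => g n ω) atTop (𝓝 (h ω)))
    (h0 : ∫⁻ ω, ENNReal.ofReal (g 0 ω) ∂μ ≠ ∞)
    (hlt : ∫⁻ ω, ENNReal.ofReal (h ω) ∂μ < ∫⁻ ω, ENNReal.ofReal (-h ω) ∂μ) :
    ∃ n, ∫⁻ ω, ENNReal.ofReal (g n ω) ∂μ < ∫⁻ ω, ENNReal.ofReal (-g n ω) ∂μ := by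
  have hpos := lintegral_tendsto_of_tendsto_of_antitone (fun n => (hg n).ennreal_ofReal)
    (h_anti.mono fun ω hω _ _ hmn => ENNReal.ofReal_le_ofReal (hω hmn)) h0
    (h_tendsto.mono fun ω hω => ENNReal.tendsto_ofReal hω)
  have hneg := lintegral_tendsto_of_tendsto_of_monotone (fun n => (hg n).neg.ennreal_ofReal)
    (h_anti.mono fun ω hω _ _ hmn => ENNReal.ofReal_le_ofReal (neg_le_neg (hω hmn)))
    (h_tendsto.mono fun ω hω => ENNReal.tendsto_ofReal hω.neg)
  exact (hpos.eventually_lt hneg hlt).exists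

end

theorem stmt14_general {Ω : Type*} [MeasurableSpace Ω] (P : Measure Ω) [IsProbabilityMeasure P]
    (M : ℝ) (f : Ω → ℝ) (hf : Measurable f)
    (hpos : ∀ᵐ ω ∂P, 0 < f ω) (hbdd : ∀ᵐ ω ∂P, f ω ≤ M)
    (hlog : ∫⁻ ω, ENNReal.ofReal (Real.log (f ω)) ∂P <
      ∫⁻ ω, ENNReal.ofReal (-Real.log (f ω)) ∂P) :
    ∃ n : ℕ, 0 < n ∧ ∫⁻ ω, ENNReal.ofReal (f ω ^ (1 / (n : ℝ))) ∂P ≤ 1 := by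
  set ℓ : ℕ → Ω → ℝ := fun n ω => ((n : ℝ) + 1) * (f ω ^ (1 / ((n : ℝ) + 1)) - 1)
  have hℓ0 : ∫⁻ ω, ENNReal.ofReal (ℓ 0 ω) ∂P ≠ ∞ := by
    refine ne_top_of_le_ne_top (b := ∫⁻ _, ENNReal.ofReal M ∂P) (by simp)
      (lintegral_mono_ae ?_)
    filter_upwards [hbdd] with ω hω
    have hℓ0_eq : ℓ 0 ω = f ω - 1 := by simp [ℓ]
    exact ENNReal.ofReal_le_ofReal (by linarith)
  obtain ⟨n, hn⟩ := exists_lintegral_ofReal_lt_lintegral_ofReal_neg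
    (fun n => by fun_prop) (hpos.mono fun _ => Real.antitone_succ_mul_rpow_one_div_succ_sub_one)
    (hpos.mono fun _ => Real.tendsto_succ_mul_rpow_one_div_succ_sub_one) hℓ0 hlog
  refine ⟨n + 1, n.succ_pos, ?_⟩
  push_cast
  refine lintegral_ofReal_le_one_of_lintegral_ofReal_sub_one_le (by fun_prop)
    (hpos.mono fun ω hω => Real.rpow_nonneg hω.le _) ?_
  simp only [← mul_neg, neg_sub] at hn
  rw [lintegral_ofReal_const_mul (by positivity), lintegral_ofReal_const_mul (by positivity)] at hn
  exact (lt_of_mul_lt_mul_left' hn).le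

/-- If `0 < f ≤ M` a.s. and `E_P[log f] < 0` (in the extended sense
`E[log_+ f] < E[log_- f]`), then `E_P[f^(1/n)] ≤ 1` for some `n ≥ 1`. -/
theorem stmt14 {Ω : Type*} [MeasurableSpace Ω] (P : Measure Ω) [IsProbabilityMeasure P]
    (M : ℝ) (hM : 0 < M) (f : Ω → ℝ) (hf : Measurable f)
    (hpos : ∀ᵐ ω ∂P, 0 < f ω) (hbdd : ∀ᵐ ω ∂P, f ω ≤ M)
    (hlog : ∫⁻ ω, ENNReal.ofReal (Real.log (f ω)) ∂P <
      ∫⁻ ω, ENNReal.ofReal (-Real.log (f ω)) ∂P) :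
    ∃ n : ℕ, 0 < n ∧ ∫⁻ ω, ENNReal.ofReal (f ω ^ (1 / (n : ℝ))) ∂P ≤ 1 :=
  stmt14_general P M f hf hpos hbdd hlog
end

section
/- Optimality of proportional consumption via supermartingale bound: let N be a nonnegative càdlàg supermartingale with N_0 = 1, and F an adapted, right-continuous, nondecreasing process with 0 ≤ F ≤ 1 and F_{0-} = 0. Then E[∫_{[0,τ]} N_t dF_t] ≤ 1 for every finite stopping time τ with E[sup_{t ≤ τ} N_t] < ∞, and consequently E[∫_{[0,∞)} N_t dF_t] ≤ 1. -/
/-!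
Sample the integrand at the dyadic grid points `k / 2 ^ m`. On the grid, Abel summation turns the
Riemann–Stieltjes sum `F₀ N₀ + ∑ (F_{k+1} - F_k) N_{k+1}` into `N₀ + ∑ (1 - F_k) (N_{k+1} - N_k)`
minus the nonnegative term `(1 - F_K) N_K`; the sum is a discrete stochastic integral of the
bounded nonnegative predictable integrand `1 - F_k` against a supermartingale, so it has
nonpositive expectation and every Riemann–Stieltjes sum has expectation at most `E[N₀] = 1`.
Sampling `N` at the dyadic point just to the right of `x` converges to `N x` by right-continuity,
so Fatou's lemma (first in `x`, then in `ω`) bounds the Stieltjes integral over `[0, ∞)`, which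
dominates the one over `[0, τ]`.
-/

open MeasureTheory Filter
open scoped ENNReal NNReal Topology

namespace MeasureTheory

def Filtration.reindex {Ω ι κ : Type*} [Preorder ι] [Preorder κ] {m : MeasurableSpace Ω}
    (𝓕 : Filtration ι m) {t : κ → ι} (ht : Monotone t) : Filtration κ m :=
  ⟨fun k => 𝓕 (t k), fun _ _ h => 𝓕.mono (ht h), fun k => 𝓕.le (t k)⟩

variable {Ω E ι κ : Type*} [Preorder ι] [Preorder κ] {m : MeasurableSpace Ω} {P : Measure Ω}
  [NormedAddCommGroup E] [NormedSpace ℝ E] [LE E]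

theorem Supermartingale.comp_monotone {𝓕 : Filtration ι m} {f : ι → Ω → E}
    (hf : Supermartingale f 𝓕 P) {t : κ → ι} (ht : Monotone t) :
    Supermartingale (fun k => f (t k)) (𝓕.reindex ht) P :=
  ⟨fun k => hf.stronglyAdapted (t k), fun _ _ h => hf.condExp_ae_le (ht h),
    fun k => hf.integrable (t k)⟩

theorem Supermartingale.sum_mul_sub [IsFiniteMeasure P] {𝓖 : Filtration ℕ m} {R : ℝ}
    {ξ f : ℕ → Ω → ℝ} (hf : Supermartingale f 𝓖 P) (hξ : StronglyAdapted 𝓖 ξ)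
    (hbdd : ∀ n ω, ξ n ω ≤ R) (hnonneg : ∀ n ω, 0 ≤ ξ n ω) :
    Supermartingale (fun n => ∑ k ∈ Finset.range n, ξ k * (f (k + 1) - f k)) 𝓖 P := by
  have hneg : (fun n => ∑ k ∈ Finset.range n, ξ k * (f (k + 1) - f k)) =
      -fun n => ∑ k ∈ Finset.range n, ξ k * ((-f) (k + 1) - (-f) k) := by
    ext n ω
    simp only [Finset.sum_apply, Pi.neg_apply, Pi.mul_apply, Pi.sub_apply,
      ← Finset.sum_neg_distrib]
    exact Finset.sum_congr rfl fun k _ => by ring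
  rw [hneg]
  exact (hf.neg.sum_mul_sub hξ hbdd hnonneg).neg

end MeasureTheory

/-- `a` is taken to vanish just before the grid (the convention `F_{0-} = 0`), so `a 0` is the
mass of the first grid point. -/
noncomputable def stieltjesSum (x : ℕ → ℝ≥0∞) (a : ℕ → ℝ) (K : ℕ) : ℝ≥0∞ :=
  x 0 * ENNReal.ofReal (a 0) + ∑ k ∈ Finset.range K, x (k + 1) * ENNReal.ofReal (a (k + 1) - a k)

theorem stieltjesSum_mono (x : ℕ → ℝ≥0∞) (a : ℕ → ℝ) : Monotone (stieltjesSum x a) :=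
  fun _ _ h => add_le_add_right (Finset.sum_le_sum_of_subset (Finset.range_subset_range.2 h)) _

theorem measurable_stieltjesSum {Ω : Type*} [MeasurableSpace Ω] {x : ℕ → Ω → ℝ≥0∞}
    {a : ℕ → Ω → ℝ} (hx : ∀ k, Measurable (x k)) (ha : ∀ k, Measurable (a k)) (K : ℕ) :
    Measurable fun ω => stieltjesSum (x · ω) (a · ω) K := by
  unfold stieltjesSum
  fun_prop

theorem stieltjesSum_ofReal {x a : ℕ → ℝ} (hx : ∀ k, 0 ≤ x k) (ha : Monotone a) (ha0 : 0 ≤ a 0)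
    (K : ℕ) :
    stieltjesSum (fun k => ENNReal.ofReal (x k)) a K =
      ENNReal.ofReal (a 0 * x 0 + ∑ k ∈ Finset.range K, (a (k + 1) - a k) * x (k + 1)) := by
  have hterm : ∀ k, 0 ≤ (a (k + 1) - a k) * x (k + 1) :=
    fun k => mul_nonneg (sub_nonneg.2 (ha k.le_succ)) (hx _)
  rw [ENNReal.ofReal_add (mul_nonneg ha0 (hx 0)) (Finset.sum_nonneg fun k _ => hterm k),
    ENNReal.ofReal_sum_of_nonneg fun k _ => hterm k, ENNReal.ofReal_mul ha0, mul_comm]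
  exact congrArg _ (Finset.sum_congr rfl fun k _ => by
    rw [ENNReal.ofReal_mul (sub_nonneg.2 (ha k.le_succ)), mul_comm])

theorem summation_by_parts_one_sub {R : Type*} [CommRing R] (x a : ℕ → R) (K : ℕ) :
    a 0 * x 0 + ∑ k ∈ Finset.range K, (a (k + 1) - a k) * x (k + 1) + (1 - a K) * x K =
      x 0 + ∑ k ∈ Finset.range K, (1 - a k) * (x (k + 1) - x k) := by
  induction K with
  | zero => simp; ring
  | succ K ih =>
    rw [Finset.sum_range_succ, Finset.sum_range_succ]
    linear_combination ih

theorem lintegral_stieltjesSum_le_of_supermartingale {Ω : Type*} {m : MeasurableSpace Ω}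
    {P : Measure Ω} [IsFiniteMeasure P] {𝓖 : Filtration ℕ m} {X A : ℕ → Ω → ℝ}
    (hX : Supermartingale X 𝓖 P) (hX0 : ∀ k ω, 0 ≤ X k ω) (hA : StronglyAdapted 𝓖 A)
    (hA0 : ∀ k ω, 0 ≤ A k ω) (hA1 : ∀ k ω, A k ω ≤ 1) (hAmono : ∀ ω, Monotone (A · ω))
    (K : ℕ) :
    ∫⁻ ω, stieltjesSum (fun k => ENNReal.ofReal (X k ω)) (A · ω) K ∂P ≤
      ENNReal.ofReal (∫ ω, X 0 ω ∂P) := by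
  set M := fun n => ∑ k ∈ Finset.range n, (1 - A k) * (X (k + 1) - X k)
  have hM : Supermartingale M 𝓖 P :=
    hX.sum_mul_sub (ξ := fun k => 1 - A k) (fun k => stronglyMeasurable_const.sub (hA k))
      (fun k ω => sub_le_self _ (hA0 k ω)) (fun k ω => sub_nonneg.2 (hA1 k ω))
  have hMK : ∫ ω, M K ω ∂P ≤ 0 := by
    simpa [M] using hM.setIntegral_le (Nat.zero_le K) MeasurableSet.univ
  set S := fun ω => A 0 ω * X 0 ω + ∑ k ∈ Finset.range K, (A (k + 1) ω - A k ω) * X (k + 1) ω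
  have hS : ∀ ω, 0 ≤ S ω := fun ω =>
    add_nonneg (mul_nonneg (hA0 0 ω) (hX0 0 ω)) (Finset.sum_nonneg fun k _ =>
      mul_nonneg (sub_nonneg.2 (hAmono ω k.le_succ)) (hX0 _ ω))
  have hSM : ∀ ω, S ω ≤ X 0 ω + M K ω := fun ω => by
    have hparts := summation_by_parts_one_sub (X · ω) (A · ω) K
    have htail := mul_nonneg (sub_nonneg.2 (hA1 K ω)) (hX0 K ω)
    simp only [M, Finset.sum_apply, Pi.mul_apply, Pi.sub_apply, Pi.one_apply]
    linarith
  calc ∫⁻ ω, stieltjesSum (fun k => ENNReal.ofReal (X k ω)) (A · ω) K ∂P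
      = ∫⁻ ω, ENNReal.ofReal (S ω) ∂P := lintegral_congr fun ω =>
        stieltjesSum_ofReal (hX0 · ω) (hAmono ω) (hA0 0 ω) K
    _ ≤ ∫⁻ ω, ENNReal.ofReal (X 0 ω + M K ω) ∂P :=
        lintegral_mono fun ω => ENNReal.ofReal_le_ofReal (hSM ω)
    _ = ENNReal.ofReal (∫ ω, X 0 ω + M K ω ∂P) :=
        (ofReal_integral_eq_lintegral_ofReal ((hX.integrable 0).add (hM.integrable K))
          (Eventually.of_forall fun ω => (hS ω).trans (hSM ω))).symm
    _ ≤ ENNReal.ofReal (∫ ω, X 0 ω ∂P) := by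
        rw [integral_add (hX.integrable 0) (hM.integrable K)]
        exact ENNReal.ofReal_le_ofReal (by linarith)

noncomputable def dyadic (m k : ℕ) : ℝ≥0 := k / 2 ^ m

noncomputable def dyadicCeil (m : ℕ) (t : ℝ≥0) : ℝ≥0 := dyadic m ⌈t * 2 ^ m⌉₊

theorem monotone_dyadic (m : ℕ) : Monotone (dyadic m) := fun _ _ h =>
  div_le_div_of_nonneg_right (by exact_mod_cast h) (by positivity)

@[simp] theorem dyadic_zero (m : ℕ) : dyadic m 0 = 0 := by simp [dyadic]

@[simp] theorem dyadicCeil_zero (m : ℕ) : dyadicCeil m 0 = 0 := by simp [dyadicCeil]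

theorem le_dyadicCeil (m : ℕ) (t : ℝ≥0) : t ≤ dyadicCeil m t :=
  (le_div_iff₀ (by positivity)).2 (Nat.le_ceil _)

theorem dyadicCeil_le (m : ℕ) (t : ℝ≥0) : dyadicCeil m t ≤ t + (2 ^ m)⁻¹ := by
  rw [dyadicCeil, dyadic, div_le_iff₀ (by positivity), add_mul,
    inv_mul_cancel₀ (by positivity)]
  exact (Nat.ceil_lt_add_one (by positivity)).le

theorem dyadicCeil_eq_of_mem_Ioc {m k : ℕ} {t : ℝ≥0}
    (ht : t ∈ Set.Ioc (dyadic m k) (dyadic m (k + 1))) : dyadicCeil m t = dyadic m (k + 1) := by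
  have h2 : (0 : ℝ≥0) < 2 ^ m := by positivity
  rw [dyadicCeil, (Nat.ceil_eq_iff k.succ_ne_zero).2]
  simp only [dyadic, Set.mem_Ioc, div_lt_iff₀ h2, le_div_iff₀ h2] at ht
  exact ⟨ht.1, by exact_mod_cast ht.2⟩

theorem tendsto_dyadicCeil (t : ℝ≥0) :
    Tendsto (fun m => dyadicCeil m t) atTop (𝓝[≥] t) := by
  have hinv : Tendsto (fun m : ℕ => t + (2 ^ m)⁻¹) atTop (𝓝 t) := by
    simpa only [← inv_pow, add_zero] using tendsto_const_nhds.add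
      (NNReal.tendsto_pow_atTop_nhds_zero_of_lt_one (r := 2⁻¹) (by norm_num))
  exact tendsto_nhdsWithin_iff.2 ⟨tendsto_of_tendsto_of_tendsto_of_le_of_le tendsto_const_nhds
    hinv (le_dyadicCeil · t) (dyadicCeil_le · t), Eventually.of_forall (le_dyadicCeil · t)⟩

theorem measurable_comp_dyadicCeil {β : Type*} [MeasurableSpace β] (f : ℝ≥0 → β) (m : ℕ) :
    Measurable fun x : ℝ => f (dyadicCeil m x.toNNReal) :=
  (measurable_from_nat (f := fun j => f (dyadic m j))).comp (by fun_prop)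

theorem setLIntegral_Iic_dyadic_comp_dyadicCeil (G : StieltjesFunction ℝ)
    (hG : Tendsto G atBot (𝓝 0)) (f : ℝ≥0 → ℝ≥0∞) (m K : ℕ) :
    ∫⁻ x in Set.Iic (dyadic m K : ℝ), f (dyadicCeil m x.toNNReal) ∂G.measure =
      stieltjesSum (fun k => f (dyadic m k)) (fun k => G (dyadic m k)) K := by
  induction K with
  | zero =>
    have hIic : Set.EqOn (fun x : ℝ => f (dyadicCeil m x.toNNReal)) (fun _ => f 0)
        (Set.Iic 0) := fun x hx => by simp [Real.toNNReal_of_nonpos hx]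
    simp only [dyadic_zero, NNReal.coe_zero, stieltjesSum, Finset.range_zero,
      Finset.sum_empty, add_zero]
    rw [setLIntegral_congr_fun measurableSet_Iic hIic, setLIntegral_const,
      G.measure_Iic hG, sub_zero]
  | succ K ih =>
    have hle : (dyadic m K : ℝ) ≤ dyadic m (K + 1) := by
      exact_mod_cast monotone_dyadic m K.le_succ
    have hIoc : Set.EqOn (fun x : ℝ => f (dyadicCeil m x.toNNReal))
        (fun _ => f (dyadic m (K + 1))) (Set.Ioc (dyadic m K) (dyadic m (K + 1))) :=
      fun x hx => congrArg f (dyadicCeil_eq_of_mem_Ioc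
        ⟨Real.lt_toNNReal_iff_coe_lt.2 hx.1, Real.toNNReal_le_iff_le_coe.2 hx.2⟩)
    rw [← Set.Iic_union_Ioc_eq_Iic hle, lintegral_union measurableSet_Ioc
      (Set.Iic_disjoint_Ioc le_rfl), ih, setLIntegral_congr_fun measurableSet_Ioc hIoc,
      setLIntegral_const, G.measure_Ioc, stieltjesSum, stieltjesSum, Finset.sum_range_succ,
      add_assoc]

theorem lintegral_comp_dyadicCeil (G : StieltjesFunction ℝ) (hG : Tendsto G atBot (𝓝 0))
    (f : ℝ≥0 → ℝ≥0∞) (m : ℕ) :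
    ∫⁻ x, f (dyadicCeil m x.toNNReal) ∂G.measure =
      ⨆ K, stieltjesSum (fun k => f (dyadic m k)) (fun k => G (dyadic m k)) K := by
  have hunion : ⋃ K : ℕ, Set.Iic (dyadic m K : ℝ) = Set.univ :=
    Set.eq_univ_of_forall fun x => Set.mem_iUnion.2 ⟨⌈x.toNNReal * 2 ^ m⌉₊,
      Real.toNNReal_le_iff_le_coe.1 (le_dyadicCeil m x.toNNReal)⟩
  rw [← setLIntegral_univ, ← hunion, setLIntegral_iUnion_of_directed _ (Monotone.directed_le
    fun _ _ h => Set.Iic_subset_Iic.2 (by exact_mod_cast monotone_dyadic m h))]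
  exact iSup_congr fun K => setLIntegral_Iic_dyadic_comp_dyadicCeil G hG f m K

theorem lintegral_le_liminf_lintegral_comp_dyadicCeil (μ : Measure ℝ) (f : ℝ≥0 → ℝ≥0∞)
    (hf : ∀ t, ContinuousWithinAt f (Set.Ici t) t) :
    ∫⁻ x, f x.toNNReal ∂μ ≤ liminf (fun m => ∫⁻ x, f (dyadicCeil m x.toNNReal) ∂μ) atTop := by
  calc ∫⁻ x, f x.toNNReal ∂μ
      = ∫⁻ x, liminf (fun m => f (dyadicCeil m x.toNNReal)) atTop ∂μ := lintegral_congr fun x =>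
        ((hf _).tendsto.comp (tendsto_dyadicCeil x.toNNReal)).liminf_eq.symm
    _ ≤ _ := lintegral_liminf_le fun m => measurable_comp_dyadicCeil f m

theorem lintegral_le_liminf_iSup_stieltjesSum (G : StieltjesFunction ℝ)
    (hG : Tendsto G atBot (𝓝 0)) (f : ℝ≥0 → ℝ≥0∞)
    (hf : ∀ t, ContinuousWithinAt f (Set.Ici t) t) :
    ∫⁻ x, f x.toNNReal ∂G.measure ≤ liminf (fun m =>
      ⨆ K, stieltjesSum (fun k => f (dyadic m k)) (fun k => G (dyadic m k)) K) atTop := by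
  simpa only [lintegral_comp_dyadicCeil G hG] using
    lintegral_le_liminf_lintegral_comp_dyadicCeil G.measure f hf

theorem lintegral_lintegral_le_of_stieltjesSum_le {Ω : Type*} [MeasurableSpace Ω]
    {P : Measure Ω} {f : ℝ≥0 → Ω → ℝ≥0∞} {G : Ω → StieltjesFunction ℝ}
    (hf : ∀ t, Measurable (f t)) (hG : ∀ t : ℝ≥0, Measurable fun ω => G ω t)
    (hfc : ∀ ω t, ContinuousWithinAt (f · ω) (Set.Ici t) t)
    (hGbot : ∀ ω, Tendsto (G ω) atBot (𝓝 0)) {c : ℝ≥0∞}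
    (hc : ∀ m K, ∫⁻ ω, stieltjesSum (fun k => f (dyadic m k) ω) (fun k => G ω (dyadic m k)) K ∂P
      ≤ c) :
    ∫⁻ ω, ∫⁻ x, f x.toNNReal ω ∂(G ω).measure ∂P ≤ c := by
  set R := fun m K ω => stieltjesSum (fun k => f (dyadic m k) ω) (fun k => G ω (dyadic m k)) K
  have hR : ∀ m K, Measurable (R m K) := fun m =>
    measurable_stieltjesSum (fun k => hf _) (fun k => hG _)
  calc ∫⁻ ω, ∫⁻ x, f x.toNNReal ω ∂(G ω).measure ∂P
      ≤ ∫⁻ ω, liminf (fun m => ⨆ K, R m K ω) atTop ∂P := lintegral_mono fun ω =>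
        lintegral_le_liminf_iSup_stieltjesSum _ (hGbot ω) (f · ω) (hfc ω)
    _ ≤ liminf (fun m => ∫⁻ ω, ⨆ K, R m K ω ∂P) atTop :=
        lintegral_liminf_le fun m => Measurable.iSup (hR m)
    _ = liminf (fun m => ⨆ K, ∫⁻ ω, R m K ω ∂P) atTop := by
        simp_rw [lintegral_iSup (hR _) fun _ _ h ω => stieltjesSum_mono _ _ h]
    _ ≤ c := liminf_le_of_frequently_le' (Frequently.of_forall fun m => iSup_le (hc m))


theorem stmt18_general {Ω : Type*} {m : MeasurableSpace Ω} (𝓕 : Filtration ℝ≥0 m)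
    (P : Measure Ω) [IsProbabilityMeasure P]
    (N : ℝ≥0 → Ω → ℝ)
    (hN : Supermartingale N 𝓕 P)
    (hNnn : ∀ ω t, 0 ≤ N t ω)
    (hN0 : ∀ᵐ ω ∂P, N 0 ω = 1)
    -- right-continuity of paths of N
    (hrc : ∀ ω t, ContinuousWithinAt (fun s => N s ω) (Set.Ici t) t)
    -- the cumulative consumption F, as a pathwise Stieltjes function
    (F : Ω → StieltjesFunction ℝ)
    (hFneg : ∀ ω, ∀ x : ℝ, x < 0 → F ω x = 0)
    (hF1 : ∀ ω x, F ω x ≤ 1)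
    (hFadapted : ∀ t : ℝ≥0, Measurable[𝓕 t] fun ω => F ω (t : ℝ)) :
    (∀ τ : Ω → ℝ≥0, IsStoppingTime 𝓕 (fun ω => (τ ω : WithTop ℝ≥0)) →
      (∫⁻ ω, ⨆ s : Set.Iic (τ ω), ENNReal.ofReal (N s ω) ∂P) < ⊤ →
      ∫⁻ ω, (∫⁻ x in Set.Icc (0 : ℝ) ((τ ω : ℝ)),
        ENNReal.ofReal (N x.toNNReal ω) ∂(F ω).measure) ∂P ≤ 1) ∧
    ∫⁻ ω, (∫⁻ x in Set.Ici (0 : ℝ),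
      ENNReal.ofReal (N x.toNNReal ω) ∂(F ω).measure) ∂P ≤ 1 := by
  have hFbot : ∀ ω, Tendsto (F ω) atBot (𝓝 0) := fun ω => tendsto_const_nhds.congr'
    ((eventually_lt_atBot 0).mono fun x hx => (hFneg ω x hx).symm)
  have hF0 : ∀ ω x, 0 ≤ F ω x := fun ω x =>
    (hFneg ω _ (min_lt_of_right_lt neg_one_lt_zero)).ge.trans ((F ω).mono (min_le_left x (-1)))
  have hIci : ∫⁻ ω, (∫⁻ x in Set.Ici (0 : ℝ),
      ENNReal.ofReal (N x.toNNReal ω) ∂(F ω).measure) ∂P ≤ 1 := by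
    refine (lintegral_mono fun ω => setLIntegral_le_lintegral _ _).trans
      (lintegral_lintegral_le_of_stieltjesSum_le
        (fun t => ((hN.stronglyMeasurable t).mono (𝓕.le t)).measurable.ennreal_ofReal)
        (fun t => (hFadapted t).mono (𝓕.le t) le_rfl)
        (fun ω t => ENNReal.continuous_ofReal.continuousAt.comp_continuousWithinAt (hrc ω t))
        hFbot fun n K => ?_)
    refine (lintegral_stieltjesSum_le_of_supermartingale (hN.comp_monotone (monotone_dyadic n))
      (fun k ω => hNnn ω _) (fun k => (hFadapted _).stronglyMeasurable) (fun k ω => hF0 ω _)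
      (fun k ω => hF1 ω _) (fun ω _ _ h => (F ω).mono (by exact_mod_cast monotone_dyadic n h))
      K).trans ?_
    simp [integral_congr_ae hN0]
  exact ⟨fun τ _ _ => (lintegral_mono fun ω => lintegral_mono_set Set.Icc_subset_Ici_self).trans
    hIci, hIci⟩

/-- Optimality of proportional consumption via a supermartingale bound: let `N` be a
nonnegative càdlàg supermartingale with `N 0 = 1`, and let `F ω` be a (pathwise)
right-continuous nondecreasing process with `F = 0` on `(-∞, 0)` (i.e. `F_{0-} = 0`),
`F ≤ 1`, adapted. Then `E[∫_{[0,τ]} N dF] ≤ 1` for every finite stopping time `τ` with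
`E[sup_{t ≤ τ} N t] < ∞`, and consequently `E[∫_{[0,∞)} N dF] ≤ 1`. -/
theorem stmt18 {Ω : Type*} {m : MeasurableSpace Ω} (𝓕 : Filtration ℝ≥0 m)
    (P : Measure Ω) [IsProbabilityMeasure P]
    (N : ℝ≥0 → Ω → ℝ)
    (hN : Supermartingale N 𝓕 P)
    (hNnn : ∀ ω t, 0 ≤ N t ω)
    (hN0 : ∀ᵐ ω ∂P, N 0 ω = 1)
    -- right-continuity of paths of N
    (hrc : ∀ ω t, ContinuousWithinAt (fun s => N s ω) (Set.Ici t) t)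
    -- existence of left limits of paths of N
    (hll : ∀ ω (t : ℝ≥0), 0 < t → ∃ l : ℝ, Tendsto (fun s => N s ω) (𝓝[<] t) (𝓝 l))
    -- the cumulative consumption F, as a pathwise Stieltjes function
    (F : Ω → StieltjesFunction ℝ)
    (hFneg : ∀ ω, ∀ x : ℝ, x < 0 → F ω x = 0)
    (hF1 : ∀ ω x, F ω x ≤ 1)
    (hFadapted : ∀ t : ℝ≥0, Measurable[𝓕 t] fun ω => F ω (t : ℝ)) :
    (∀ τ : Ω → ℝ≥0, IsStoppingTime 𝓕 (fun ω => (τ ω : WithTop ℝ≥0)) →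
      (∫⁻ ω, ⨆ s : Set.Iic (τ ω), ENNReal.ofReal (N s ω) ∂P) < ⊤ →
      ∫⁻ ω, (∫⁻ x in Set.Icc (0 : ℝ) ((τ ω : ℝ)),
        ENNReal.ofReal (N x.toNNReal ω) ∂(F ω).measure) ∂P ≤ 1) ∧
    ∫⁻ ω, (∫⁻ x in Set.Ici (0 : ℝ),
      ENNReal.ofReal (N x.toNNReal ω) ∂(F ω).measure) ∂P ≤ 1 :=
  stmt18_general 𝓕 P N hN hNnn hN0 hrc F hFneg hF1 hFadapted
end
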